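/- arXiv:2310.17730 — 4 statements merged into one kernel-verified Lean document; each statement's English description precedes it below -/
import Mathlib

section
/- Let G be a graph and 𝓑 = (B_1, B_2, B_3, B_4) a rainbow (2 choose 2)-free blockade in G of width W. Then there exists a set A ⊆ B_1 ∪ B_2 with |A| ≥ W such that A is anticomplete to B_3 or A is anticomplete to B_4 (i.e., (A, B_3) or (A, B_4) is a pure pair with no edges between the two sets). -/
/-!
In a rainbow `(2 choose 2)`-free blockade no vertex of the blocks has neighbours in two
different blocks, since such a vertex witnesses the `(2 choose 2)`-property of a rainbow pair.
Hence each vertex of `B 0 ∪ B 1`, a set of at least `2W` vertices, is anticomplete to `B 2` or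
to `B 3`, and one of these two classes has at least `W` elements.
-/

/-- `(a 0, ..., a (k-1))` has the `(k choose 2)`-property over `X`: there are witnesses
`b i j ∈ X` (for `i < j`) adjacent to `a i` and `a j` and non-adjacent to every other `a m`. -/
def HasKC2Prop {V : Type} (G : SimpleGraph V) {k : ℕ} (a : Fin k → V) (X : Set V) : Prop :=
  ∃ b : Fin k → Fin k → V, ∀ i j : Fin k, i < j →
    b i j ∈ X ∧ G.Adj (b i j) (a i) ∧ G.Adj (b i j) (a j) ∧
    ∀ m : Fin k, m ≠ i → m ≠ j → ¬ G.Adj (b i j) (a m)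

/-- A blockade: a sequence of pairwise disjoint nonempty sets of vertices. -/
def IsBlockade {V : Type} {t : ℕ} (B : Fin t → Finset V) : Prop :=
  (∀ i, (B i).Nonempty) ∧ ∀ i j, i ≠ j → Disjoint (B i) (B j)

/-- The blockade `B` is rainbow `(k choose 2)`-free: there is no tuple of vertices
lying in pairwise distinct blocks with the `(k choose 2)`-property over the union
of the blocks. -/
def IsRainbowKC2Free {V : Type} (G : SimpleGraph V) {t : ℕ} (B : Fin t → Finset V)
    (k : ℕ) : Prop :=
  ¬ ∃ (a : Fin k → V) (f : Fin k → Fin t), Function.Injective f ∧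
      (∀ i, a i ∈ B (f i)) ∧ HasKC2Prop G a {x | ∃ i, x ∈ B i}

theorem hasKC2Prop_two {V : Type} {G : SimpleGraph V} {y z x : V} {X : Set V} (hx : x ∈ X)
    (hxy : G.Adj x y) (hxz : G.Adj x z) : HasKC2Prop G ![y, z] X :=
  ⟨fun _ _ => x, fun i j hij => by fin_cases i <;> fin_cases j <;> simp_all⟩

theorem IsRainbowKC2Free.not_adj_of_adj {V : Type} {G : SimpleGraph V} {t : ℕ}
    {B : Fin t → Finset V} (hfree : IsRainbowKC2Free G B 2) {i j k : Fin t} (hij : i ≠ j)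
    {x y z : V} (hx : x ∈ B k) (hy : y ∈ B i) (hz : z ∈ B j) (hxy : G.Adj x y) :
    ¬ G.Adj x z := fun hxz =>
  hfree ⟨![y, z], ![i, j], by simpa [Function.Injective, Fin.forall_fin_two] using ⟨hij, hij.symm⟩,
    by simpa [Fin.forall_fin_two] using ⟨hy, hz⟩, hasKC2Prop_two ⟨k, hx⟩ hxy hxz⟩

theorem IsBlockade.card_union_ge {V : Type} [DecidableEq V] {t : ℕ} {B : Fin t → Finset V}
    (hB : IsBlockade B) {i j : Fin t} (hij : i ≠ j) {W : ℕ} (hW : ∀ i, W ≤ (B i).card) :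
    2 * W ≤ (B i ∪ B j).card := by
  rw [Finset.card_union_of_disjoint (hB.2 i j hij)]
  linarith [hW i, hW j]

theorem Finset.le_card_filter_or_le_card_filter_not {α : Type} (s : Finset α) (p : α → Prop)
    [DecidablePred p] {W : ℕ} (hs : 2 * W ≤ s.card) :
    W ≤ (s.filter p).card ∨ W ≤ (s.filter (¬ p ·)).card := by
  have := s.card_filter_add_card_filter_not p
  omega

/-- Given a rainbow `(2 choose 2)`-free blockade `(B 0, B 1, B 2, B 3)` of width `W`,
there is a set `A ⊆ B 0 ∪ B 1` with `|A| ≥ W` that is anticomplete to `B 2` or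
anticomplete to `B 3`. -/
theorem rainbow_two_free_pure_pair {V : Type} [DecidableEq V] (G : SimpleGraph V)
    (B : Fin 4 → Finset V) (W : ℕ) (hB : IsBlockade B)
    (hW : ∀ i, W ≤ (B i).card) (hfree : IsRainbowKC2Free G B 2) :
    ∃ A : Finset V, A ⊆ B 0 ∪ B 1 ∧ W ≤ A.card ∧
      ((∀ x ∈ A, ∀ y ∈ B 2, ¬ G.Adj x y) ∨ (∀ x ∈ A, ∀ y ∈ B 3, ¬ G.Adj x y)) := by
  classical
  let anti₂ : V → Prop := fun x => ∀ y ∈ B 2, ¬ G.Adj x y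
  rcases (B 0 ∪ B 1).le_card_filter_or_le_card_filter_not anti₂
      (hB.card_union_ge (by decide) hW) with hS | hT
  · exact ⟨_, Finset.filter_subset _ _, hS, Or.inl fun x hx => (Finset.mem_filter.1 hx).2⟩
  · refine ⟨_, Finset.filter_subset _ _, hT, Or.inr fun x hx z hz => ?_⟩
    obtain ⟨hx01, hx2⟩ := Finset.mem_filter.1 hx
    obtain ⟨y, hy, hxy⟩ : ∃ y ∈ B 2, G.Adj x y := by simpa [anti₂] using hx2
    obtain ⟨k, hk⟩ : ∃ k, x ∈ B k := by
      rcases Finset.mem_union.1 hx01 with h | h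
      exacts [⟨0, h⟩, ⟨1, h⟩]
    exact hfree.not_adj_of_adj (by decide : (2 : Fin 4) ≠ 3) hk hy hz hxy
end

section
/- For all integers s ≥ 1, let D_s = 2^{s-1}·4^{2s-1}. Let G be a graph and 𝓑 = (B_i : i = 1, ..., D_s) a rainbow (2 choose 2)-free blockade in G of length D_s and width W. Then G admits a pure blockade 𝓐 whose pattern is a cograph, of length 2^s and width at least W/D_s. -/
/-- The family of cographs: the smallest family of (finite) graphs containing every
one-vertex graph and closed under complement, disjoint union, and isomorphism. -/
inductive IsCograph : ∀ {V : Type}, SimpleGraph V → Prop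
  | single : IsCograph (⊥ : SimpleGraph (Fin 1))
  | compl {V : Type} {G : SimpleGraph V} : IsCograph G → IsCograph Gᶜ
  | disjUnion {V W : Type} {G : SimpleGraph V} {H : SimpleGraph W} :
      IsCograph G → IsCograph H → IsCograph (G ⊕g H)
  | iso {V W : Type} {G : SimpleGraph V} {H : SimpleGraph W} :
      G ≃g H → IsCograph G → IsCograph H

/-- A pure blockade: a blockade in which every pair of distinct blocks is a pure pair,
i.e. one block is complete or anticomplete to the other. -/
def IsPureBlockade {V : Type} (G : SimpleGraph V) {m : ℕ} (A : Fin m → Finset V) : Prop :=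
  (∀ i, (A i).Nonempty) ∧ (∀ i j, i ≠ j → Disjoint (A i) (A j)) ∧
  ∀ i j, i ≠ j →
    ((∀ x ∈ A i, ∀ y ∈ A j, G.Adj x y) ∨ (∀ x ∈ A i, ∀ y ∈ A j, ¬ G.Adj x y))

/-- The pattern of a pure blockade: `i` and `j` are adjacent iff block `i` is complete
to block `j`. -/
def blockadePattern {V : Type} (G : SimpleGraph V) {m : ℕ} (A : Fin m → Finset V) :
    SimpleGraph (Fin m) :=
  SimpleGraph.fromRel (fun i j => ∀ x ∈ A i, ∀ y ∈ A j, G.Adj x y)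

open Finset

theorem isCograph_bot_fin : ∀ n : ℕ, IsCograph (⊥ : SimpleGraph (Fin (n + 1)))
  | 0 => .single
  | n + 1 => .iso ⟨finSumFinEquiv, by rintro (a | a) (b | b) <;> simp⟩
      ((isCograph_bot_fin n).disjUnion .single)

theorem isCograph_bot {α : Type} [Finite α] [Nonempty α] : IsCograph (⊥ : SimpleGraph α) := by
  obtain ⟨n, ⟨e⟩⟩ := Finite.exists_equiv_fin α
  obtain ⟨n, rfl⟩ : ∃ k, n = k + 1 :=
    Nat.exists_eq_succ_of_ne_zero fun h => (h ▸ e).isEmpty.false (Classical.arbitrary α)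
  exact .iso ⟨e.symm, by simp⟩ (isCograph_bot_fin n)

theorem exists_large_finset_free_of_swaps {α : Type*} [Fintype α] [LinearOrder α] (c : α → α) :
    ∃ S : Finset α, Fintype.card α ≤ 2 * #S ∧ ∀ i ∈ S, ∀ j ∈ S, c i = j → c j = i → i = j := by
  classical
  set R : Finset α := {i | c (c i) = i ∧ c i < i}
  have hR : #R ≤ #Rᶜ := by
    refine card_le_card_of_injOn c (fun i hi => ?_) (fun i hi j hj hij => ?_)
    · simp only [R, mem_coe, mem_compl, mem_filter, mem_univ, true_and] at hi ⊢
      rw [hi.1]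
      exact fun h => lt_asymm h.2 hi.2
    · simp only [R, mem_coe, mem_filter, mem_univ, true_and] at hi hj
      rw [← hi.1, ← hj.1, hij]
  refine ⟨Rᶜ, by have := card_add_card_compl R; omega, fun i hi j hj hij hji => ?_⟩
  simp only [mem_compl, mem_filter, mem_univ, true_and, R] at hi hj
  rcases lt_trichotomy i j with h | h | h
  · exact absurd ⟨by rw [hji, hij], hji ▸ h⟩ hj
  · exact h
  · exact absurd ⟨by rw [hij, hji], hij ▸ h⟩ hi

theorem IsRainbowKC2Free.eq_of_adj_of_adj {V : Type} {G : SimpleGraph V} {t : ℕ}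
    {B : Fin t → Finset V} (hfree : IsRainbowKC2Free G B 2) {b x y : V} {k i j : Fin t}
    (hb : b ∈ B k) (hx : x ∈ B i) (hy : y ∈ B j) (hbx : G.Adj b x) (hby : G.Adj b y) :
    i = j := by
  by_contra hij
  refine hfree ⟨![x, y], ![i, j], injective_pair_iff_ne.mpr hij, fun p => ?_,
    fun _ _ => b, fun p q hpq => ?_⟩
  · fin_cases p <;> assumption
  · obtain ⟨rfl, rfl⟩ : p = 0 ∧ q = 1 := by omega
    exact ⟨⟨k, hb⟩, hbx, hby, fun m hm0 hm1 => by omega⟩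

theorem IsRainbowKC2Free.exists_block_containing_neighbors {V : Type} {G : SimpleGraph V} {t : ℕ}
    {B : Fin t → Finset V} (hfree : IsRainbowKC2Free G B 2) (ht : 0 < t) :
    ∃ φ : V → Fin t, ∀ ⦃x y : V⦄ ⦃i j : Fin t⦄, x ∈ B i → y ∈ B j → G.Adj x y → φ x = j := by
  have : ∀ x, ∃ j₀ : Fin t, ∀ ⦃y i j⦄, x ∈ B i → y ∈ B j → G.Adj x y → j₀ = j := by
    intro x
    by_cases h : ∃ j₀, ∃ y₀ ∈ B j₀, G.Adj x y₀
    · obtain ⟨j₀, y₀, hy₀, hxy₀⟩ := h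
      exact ⟨j₀, fun y i j hx hy hxy => hfree.eq_of_adj_of_adj hx hy₀ hy hxy₀ hxy⟩
    · exact ⟨⟨0, ht⟩, fun y i j _ hy hxy => absurd ⟨j, y, hy, hxy⟩ h⟩
  choose φ hφ using this
  exact ⟨φ, fun x y i j hx hy hxy => hφ x hx hy hxy⟩

def PairwiseAnticomplete {V ι : Type*} (G : SimpleGraph V) (A : ι → Finset V) : Prop :=
  ∀ i j, i ≠ j → ∀ x ∈ A i, ∀ y ∈ A j, ¬ G.Adj x y

theorem PairwiseAnticomplete.isPureBlockade {V : Type} {G : SimpleGraph V} {m : ℕ}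
    {A : Fin m → Finset V} (hanti : PairwiseAnticomplete G A) (hA : IsBlockade A) :
    IsPureBlockade G A :=
  ⟨hA.1, hA.2, fun i j hij => .inr (hanti i j hij)⟩

theorem PairwiseAnticomplete.blockadePattern_eq_bot {V : Type} {G : SimpleGraph V} {m : ℕ}
    {A : Fin m → Finset V} (hanti : PairwiseAnticomplete G A) (hA : ∀ i, (A i).Nonempty) :
    blockadePattern G A = ⊥ := by
  ext i j
  simp only [blockadePattern, SimpleGraph.fromRel_adj, SimpleGraph.bot_adj, iff_false]
  rintro ⟨hij, h | h⟩
  · obtain ⟨x, hx⟩ := hA i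
    obtain ⟨y, hy⟩ := hA j
    exact hanti i j hij x hx y hy (h x hx y hy)
  · obtain ⟨x, hx⟩ := hA j
    obtain ⟨y, hy⟩ := hA i
    exact hanti j i (Ne.symm hij) x hx y hy (h x hx y hy)

theorem IsRainbowKC2Free.exists_anticomplete_blockade {V : Type} {G : SimpleGraph V}
    {t m W : ℕ} {B : Fin t → Finset V} (hfree : IsRainbowKC2Free G B 2) (hB : IsBlockade B)
    (hW : ∀ i, W ≤ #(B i)) (hm : 0 < m) (hmt : 2 * m ≤ t) :
    ∃ A : Fin m → Finset V,
      IsBlockade A ∧ PairwiseAnticomplete G A ∧ ∀ i, (W : ℝ) / t ≤ #(A i) := by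
  classical
  have ht₀ : 0 < t := by omega
  have ht : (0 : ℝ) < t := by exact_mod_cast ht₀
  obtain ⟨φ, hφ⟩ := hfree.exists_block_containing_neighbors ht₀
  have hdominant : ∀ i, ∃ j, (#(B i) : ℝ) / t ≤ #{x ∈ B i | φ x = j} := fun i => by
    obtain ⟨j, -, hj⟩ := exists_le_card_fiber_of_nsmul_le_card_of_maps_to
      (fun x _ => mem_univ (φ x)) ⟨⟨0, ht₀⟩, mem_univ _⟩ (b := (#(B i) : ℝ) / t)
      (by rw [card_univ, Fintype.card_fin, nsmul_eq_mul, mul_div_cancel₀ _ ht.ne'])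
    exact ⟨j, hj⟩
  choose c hc using hdominant
  obtain ⟨S, hS, hswap⟩ := exists_large_finset_free_of_swaps c
  obtain ⟨K, hKS, hK⟩ := exists_subset_card_eq (s := S) (n := m) <| by
    rw [Fintype.card_fin] at hS; omega
  set g := K.orderEmbOfFin hK
  have hwidth : ∀ i, (W : ℝ) / t ≤ #{x ∈ B (g i) | φ x = c (g i)} := fun i =>
    (div_le_div_of_nonneg_right (by exact_mod_cast hW _) ht.le).trans (hc _)
  refine ⟨fun i => {x ∈ B (g i) | φ x = c (g i)}, ⟨fun i => ?_, fun i j hij => ?_⟩,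
    fun i j hij x hx y hy hxy => ?_, hwidth⟩
  · have : (0 : ℝ) < #{x ∈ B (g i) | φ x = c (g i)} :=
      (div_pos (by exact_mod_cast (hB.1 _).card_pos) ht).trans_le (hc _)
    exact card_pos.mp (by exact_mod_cast this)
  · exact (hB.2 _ _ (g.injective.ne hij)).mono (filter_subset _ _) (filter_subset _ _)
  · rw [mem_filter] at hx hy
    exact hij <| g.injective <| hswap _ (hKS (K.orderEmbOfFin_mem hK i)) _
      (hKS (K.orderEmbOfFin_mem hK j)) (hx.2 ▸ hφ hx.1 hy.1 hxy) (hy.2 ▸ hφ hy.1 hx.1 hxy.symm)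

/-- For `s ≥ 1` let `D_s = 2^(s-1)·4^(2s-1)`. If `G` has a rainbow `(2 choose 2)`-free
blockade of length `D_s` and width `W`, then `G` admits a pure blockade with a cograph
pattern, of length `2^s` and width at least `W / D_s`. -/
theorem rainbow_two_free_pure_blockade {V : Type} (G : SimpleGraph V)
    (s : ℕ) (hs : 1 ≤ s)
    (B : Fin (2 ^ (s - 1) * 4 ^ (2 * s - 1)) → Finset V) (W : ℕ)
    (hB : IsBlockade B) (hW : ∀ i, W ≤ (B i).card)
    (hfree : IsRainbowKC2Free G B 2) :
    ∃ A : Fin (2 ^ s) → Finset V,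
      IsPureBlockade G A ∧ IsCograph (blockadePattern G A) ∧
      ∀ i, (W : ℝ) / ((2 ^ (s - 1) * 4 ^ (2 * s - 1) : ℕ) : ℝ) ≤ ((A i).card : ℝ) := by
  have hlength : 2 * 2 ^ s ≤ 2 ^ (s - 1) * 4 ^ (2 * s - 1) := by
    rw [← pow_succ', show 4 = 2 ^ 2 from rfl, ← pow_mul, ← pow_add]
    exact Nat.pow_le_pow_right two_pos (by omega)
  obtain ⟨A, hA, hanti, hwidth⟩ :=
    hfree.exists_anticomplete_blockade hB hW (Nat.two_pow_pos s) hlength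
  refine ⟨A, hanti.isPureBlockade hA, ?_, hwidth⟩
  rw [hanti.blockadePattern_eq_bot hA.1]
  exact isCograph_bot
end

section
/- Let k ≥ 2 and let 𝓐 = (A_i : 1 ≤ i ≤ t) be a rainbow (k choose 2)-free blockade in a graph G, with union A. Suppose a ∈ A, say a ∈ A_{i_0}, and ((a_j, B_j) : 1 ≤ j ≤ t') is a comb in (E_a ∩ A, ¬E_a ∩ A) (where E_a is the set of neighbours of a and ¬E_a the set of non-neighbours of a) such that 𝓑 = (B_j : 1 ≤ j ≤ t') is a minor of 𝓐 and B_j ∩ A_{i_0} = ∅ for all j. Then 𝓑 is rainbow (k−1 choose 2)-free. -/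
/-- `((a i, B i) : i < t')` is a `(t', k)`-comb in `(C, D)` (for disjoint `C`, `D`):
the `a i` are distinct vertices of `C`; the `B i` are pairwise disjoint subsets of `D`,
each of cardinality at least `k` and avoiding all the `a j`; each `a i` is adjacent to
every vertex of `B i` and has no neighbour in `B j` for `j ≠ i`. -/
def IsCombIn {V : Type} (G : SimpleGraph V) {t' : ℕ} (a : Fin t' → V)
    (B : Fin t' → Finset V) (k : ℝ) (C D : Set V) : Prop :=
  Disjoint C D ∧
  Function.Injective a ∧
  (∀ i, a i ∈ C) ∧
  (∀ i, (↑(B i) : Set V) ⊆ D) ∧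
  (∀ i j, i ≠ j → Disjoint (B i) (B j)) ∧
  (∀ i j, a i ∉ B j) ∧
  (∀ i, ∀ x ∈ B i, G.Adj (a i) x) ∧
  (∀ i j, i ≠ j → ∀ x ∈ B j, ¬ G.Adj (a i) x) ∧
  (∀ i, k ≤ ((B i).card : ℝ))

/-! Prepend `a` to a rainbow `(k-1 choose 2)`-tuple `c` of the minor, with `c j ∈ B (f j)`.
The witness for the pair `(a, c j)` is the tooth `as (f j)` of the comb: it is adjacent to `a`
and to the whole block `B (f j)`, and to no other block. The old witnesses lie in blocks of the
comb, hence are non-adjacent to `a`. As the blocks of the minor avoid `A i₀`, this gives a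
rainbow `(k choose 2)`-tuple of `𝓐`. -/

section

variable {V : Type} (G : SimpleGraph V)

theorem HasKC2Prop.mono {k : ℕ} {c : Fin k → V} {X Y : Set V} (hc : HasKC2Prop G c X)
    (hXY : X ⊆ Y) : HasKC2Prop G c Y := by
  obtain ⟨b, hb⟩ := hc
  exact ⟨b, fun i j hij => (hb i j hij).imp_left (@hXY _)⟩

theorem HasKC2Prop.cons {m : ℕ} {a : V} {c d : Fin m → V} {X : Set V}
    (hc : HasKC2Prop G c X) (hXa : ∀ x ∈ X, ¬ G.Adj x a)
    (hda : ∀ j, G.Adj (d j) a) (hdc : ∀ j, G.Adj (d j) (c j))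
    (hdc_ne : ∀ j n, n ≠ j → ¬ G.Adj (d j) (c n)) :
    HasKC2Prop G (Fin.cons a c : Fin (m + 1) → V) (X ∪ Set.range d) := by
  obtain ⟨b, hb⟩ := hc
  refine ⟨Fin.cons (Fin.cons a d) (fun i => Fin.cons a (b i)), fun i j hij => ?_⟩
  induction j using Fin.cases with
  | zero => exact absurd hij (Fin.not_lt_zero i)
  | succ j =>
    induction i using Fin.cases with
    | zero =>
      simp only [Fin.cons_zero, Fin.cons_succ]
      refine ⟨Or.inr ⟨j, rfl⟩, hda j, hdc j, fun n hn0 hnj => ?_⟩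
      induction n using Fin.cases with
      | zero => exact absurd rfl hn0
      | succ n => exact hdc_ne j n (fun h => hnj (congrArg Fin.succ h))
    | succ i =>
      obtain ⟨hbX, hbi, hbj, hbn⟩ := hb i j (Fin.succ_lt_succ_iff.mp hij)
      simp only [Fin.cons_succ]
      refine ⟨Or.inl hbX, hbi, hbj, fun n hni hnj => ?_⟩
      induction n using Fin.cases with
      | zero => exact hXa _ hbX
      | succ n =>
        exact hbn n (fun h => hni (congrArg Fin.succ h)) (fun h => hnj (congrArg Fin.succ h))

theorem not_isRainbowKC2Free_zero {t : ℕ} (B : Fin t → Finset V) :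
    ¬ IsRainbowKC2Free G B 0 :=
  fun h => h ⟨Fin.elim0, Fin.elim0, fun i => i.elim0, fun i => i.elim0,
    Fin.elim0, fun i => i.elim0⟩

end

theorem comb_minor_rainbow_free_general {V : Type} (G : SimpleGraph V) (k t t' : ℕ)
    (A : Fin t → Finset V)
    (hfree : IsRainbowKC2Free G A k)
    (a : V) (i₀ : Fin t) (ha : a ∈ A i₀)
    (as : Fin t' → V) (B : Fin t' → Finset V)
    (hcomb : IsCombIn G as B 0
      {x | (∃ i, x ∈ A i) ∧ G.Adj a x} {x | (∃ i, x ∈ A i) ∧ ¬ G.Adj a x})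
    (g : Fin t' → Fin t) (hg : StrictMono g)
    (hsub : ∀ j, B j ⊆ A (g j))
    (hi₀ : ∀ j, Disjoint (B j) (A i₀)) :
    IsRainbowKC2Free G B (k - 1) := by
  cases k with
  | zero => exact (not_isRainbowKC2Free_zero G A hfree).elim
  | succ m =>
    rw [Nat.add_sub_cancel]
    rintro ⟨c, f, hf, hcf, hc⟩
    obtain ⟨-, -, hasC, hBD, -, -, hadj, hnonadj, -⟩ := hcomb
    have hgf : ∀ j, g (f j) ≠ i₀ := fun j h =>
      Finset.disjoint_left.mp (hi₀ (f j)) (hcf j) (h ▸ hsub (f j) (hcf j))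
    have hprop := hc.cons G (d := as ∘ f) (fun x ⟨j, hx⟩ h => (hBD j hx).2 h.symm)
      (fun j => (hasC (f j)).2.symm) (fun j => hadj (f j) (c j) (hcf j))
      (fun j n hnj => hnonadj (f j) (f n) (hf.ne hnj.symm) (c n) (hcf n))
    refine hfree ⟨Fin.cons a c, Fin.cons i₀ (g ∘ f),
      Fin.cons_injective_iff.mpr ⟨fun ⟨j, hj⟩ => hgf j hj, hg.injective.comp hf⟩,
      fun i => Fin.cases ha (fun j => hsub (f j) (hcf j)) i, hprop.mono G ?_⟩
    rintro x (⟨j, hx⟩ | ⟨j, rfl⟩)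
    exacts [⟨g j, hsub j hx⟩, (hasC (f j)).1]

/-- Let `k ≥ 2` and let `𝓐 = (A i : i < t)` be a rainbow `(k choose 2)`-free blockade,
with union `A`. If `a ∈ A i₀` and `((as j, B j) : j < t')` is a comb in
`(E_a ∩ A, ¬E_a ∩ A)` such that `(B j : j < t')` is a minor of `𝓐` (witnessed by a
strictly monotone `g` with `B j ⊆ A (g j)`) and `B j ∩ A i₀ = ∅` for all `j`, then
`(B j : j < t')` is rainbow `(k-1 choose 2)`-free. -/
theorem comb_minor_rainbow_free {V : Type} (G : SimpleGraph V) (k t t' : ℕ)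
    (hk : 2 ≤ k) (A : Fin t → Finset V) (hA : IsBlockade A)
    (hfree : IsRainbowKC2Free G A k)
    (a : V) (i₀ : Fin t) (ha : a ∈ A i₀)
    (as : Fin t' → V) (B : Fin t' → Finset V)
    (hcomb : IsCombIn G as B 0
      {x | (∃ i, x ∈ A i) ∧ G.Adj a x} {x | (∃ i, x ∈ A i) ∧ ¬ G.Adj a x})
    (g : Fin t' → Fin t) (hg : StrictMono g)
    (hsub : ∀ j, B j ⊆ A (g j)) (hne : ∀ j, (B j).Nonempty)
    (hi₀ : ∀ j, Disjoint (B j) (A i₀)) :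
    IsRainbowKC2Free G B (k - 1) :=
  comb_minor_rainbow_free_general G k t t' A hfree a i₀ ha as B hcomb g hg hsub hi₀
end

section
/- Let 0 < τ < 1 and let G be a τ-critical graph. Suppose C_1, ..., C_m are pairwise disjoint nonempty proper subsets of V(G), pairwise anticomplete (no edges between C_u and C_{u'} for u ≠ u'), each of cardinality at least w ≥ 1. Then G contains an induced cograph of size at least m·w^τ; consequently m·w^τ < |G|^τ. -/
/-- A graph `G` is `τ`-critical if every induced cograph in `G` has size `< |G|^τ`,
while every nonempty proper induced subgraph `G'` of `G` contains an induced cograph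
of size at least `|G'|^τ`. -/
def TauCritical {V : Type} [Fintype V] (τ : ℝ) (G : SimpleGraph V) : Prop :=
  (∀ S : Finset V, IsCograph (G.induce (↑S : Set V)) →
      (S.card : ℝ) < (Fintype.card V : ℝ) ^ τ) ∧
  (∀ S : Finset V, S.Nonempty → S ≠ Finset.univ →
      ∃ T ⊆ S, IsCograph (G.induce (↑T : Set V)) ∧ (S.card : ℝ) ^ τ ≤ (T.card : ℝ))

namespace SimpleGraph

variable {V : Type} {G : SimpleGraph V}

variable (G) in
def IsAnticompleteBetween (s t : Set V) : Prop :=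
  ∀ ⦃x⦄, x ∈ s → ∀ ⦃y⦄, y ∈ t → ¬G.Adj x y

open Classical in
noncomputable def induceUnionIsoSum {s t : Set V} (hst : Disjoint s t)
    (hanti : G.IsAnticompleteBetween s t) : G.induce s ⊕g G.induce t ≃g G.induce (s ∪ t) where
  toEquiv := (Equiv.Set.union hst).symm
  map_rel_iff' := by
    rintro (a | a) (b | b) <;>
      simp only [comap_adj, Function.Embedding.subtype_apply, Equiv.Set.union_symm_apply_left,
        Equiv.Set.union_symm_apply_right, sum_adj]
    · exact iff_false_intro (hanti a.2 b.2)
    · exact iff_false_intro fun h => hanti b.2 a.2 h.symm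

end SimpleGraph

open SimpleGraph Finset

theorem IsCograph.induce_union {V : Type} {G : SimpleGraph V} {s t : Set V}
    (hs : IsCograph (G.induce s)) (ht : IsCograph (G.induce t)) (hst : Disjoint s t)
    (hanti : G.IsAnticompleteBetween s t) : IsCograph (G.induce (s ∪ t)) :=
  .iso (induceUnionIsoSum hst hanti) (.disjUnion hs ht)

theorem IsCograph.induce_biUnion {ι V : Type} [DecidableEq V] {G : SimpleGraph V}
    {s : Finset ι} (hs : s.Nonempty) {T : ι → Finset V}
    (hdisj : (s : Set ι).PairwiseDisjoint T)
    (hanti : (s : Set ι).Pairwise fun i j => G.IsAnticompleteBetween (T i) (T j))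
    (hT : ∀ i ∈ s, IsCograph (G.induce (T i : Set V))) :
    IsCograph (G.induce (s.biUnion T : Set V)) := by
  classical
  induction hs using Finset.Nonempty.cons_induction with
  | singleton i => rw [singleton_biUnion]; exact hT i (mem_singleton_self i)
  | cons i s hi hs ih =>
    have hsub : (s : Set ι) ⊆ (cons i s hi : Set ι) := by simp
    have hne : ∀ j ∈ s, i ≠ j := fun j hj h => hi (h ▸ hj)
    rw [cons_eq_insert, biUnion_insert, coe_union]
    refine (hT i (mem_cons_self i s)).induce_union ?_ ?_ ?_
    · exact ih (hdisj.subset hsub) (hanti.mono hsub) fun j hj => hT j (mem_cons_of_mem hj)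
    · simpa only [disjoint_coe, disjoint_biUnion_right] using fun j hj =>
        hdisj (mem_cons_self i s) (mem_cons_of_mem hj) (hne j hj)
    · intro x hx y hy
      obtain ⟨j, hj, hyj⟩ := mem_biUnion.mp hy
      exact hanti (mem_cons_self i s) (mem_cons_of_mem hj) (hne j hj) hx hyj

theorem tauCritical_anticomplete_cograph_general {V : Type} [Fintype V] (G : SimpleGraph V)
    (τ : ℝ) (hτ0 : 0 < τ) (hcrit : TauCritical τ G)
    (m w : ℕ) (hm : 1 ≤ m) (C : Fin m → Finset V)
    (hne : ∀ u, (C u).Nonempty) (hproper : ∀ u, C u ≠ Finset.univ)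
    (hdisj : ∀ u u', u ≠ u' → Disjoint (C u) (C u'))
    (hanti : ∀ u u', u ≠ u' → ∀ x ∈ C u, ∀ y ∈ C u', ¬ G.Adj x y)
    (hcard : ∀ u, w ≤ (C u).card) :
    (∃ S : Finset V, IsCograph (G.induce (↑S : Set V)) ∧
        (m : ℝ) * (w : ℝ) ^ τ ≤ (S.card : ℝ)) ∧
      (m : ℝ) * (w : ℝ) ^ τ < (Fintype.card V : ℝ) ^ τ := by
  classical
  choose T hTC hTcog hTcard using fun u => hcrit.2 (C u) (hne u) (hproper u)
  have hTdisj : ((univ : Finset (Fin m)) : Set (Fin m)).PairwiseDisjoint T := fun u _ u' _ h =>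
    (hdisj u u' h).mono (hTC u) (hTC u')
  have hScog : IsCograph (G.induce (univ.biUnion T : Set V)) :=
    IsCograph.induce_biUnion ⟨⟨0, hm⟩, mem_univ _⟩ hTdisj
      (fun u _ u' _ h x hx y hy => hanti u u' h x (hTC u hx) y (hTC u' hy)) fun u _ => hTcog u
  have hScard : (m : ℝ) * (w : ℝ) ^ τ ≤ #(univ.biUnion T) := by
    rw [card_biUnion hTdisj]
    push_cast
    calc (m : ℝ) * (w : ℝ) ^ τ = ∑ _u : Fin m, (w : ℝ) ^ τ := by simp
      _ ≤ ∑ u, (#(T u) : ℝ) := sum_le_sum fun u _ =>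
          (Real.rpow_le_rpow (by positivity) (by exact_mod_cast hcard u) hτ0.le).trans (hTcard u)
  exact ⟨⟨_, hScog, hScard⟩, hScard.trans_lt (hcrit.1 _ hScog)⟩

/-- Let `0 < τ < 1` and let `G` be `τ`-critical. If `C 0, ..., C (m-1)` (with `m ≥ 1`)
are pairwise disjoint nonempty proper subsets of the vertex set, pairwise anticomplete
and each of cardinality at least `w ≥ 1`, then `G` contains an induced cograph of size
at least `m·w^τ`; consequently `m·w^τ < |G|^τ`. -/
theorem tauCritical_anticomplete_cograph {V : Type} [Fintype V] (G : SimpleGraph V)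
    (τ : ℝ) (hτ0 : 0 < τ) (hτ1 : τ < 1) (hcrit : TauCritical τ G)
    (m w : ℕ) (hm : 1 ≤ m) (hw : 1 ≤ w) (C : Fin m → Finset V)
    (hne : ∀ u, (C u).Nonempty) (hproper : ∀ u, C u ≠ Finset.univ)
    (hdisj : ∀ u u', u ≠ u' → Disjoint (C u) (C u'))
    (hanti : ∀ u u', u ≠ u' → ∀ x ∈ C u, ∀ y ∈ C u', ¬ G.Adj x y)
    (hcard : ∀ u, w ≤ (C u).card) :
    (∃ S : Finset V, IsCograph (G.induce (↑S : Set V)) ∧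
        (m : ℝ) * (w : ℝ) ^ τ ≤ (S.card : ℝ)) ∧
      (m : ℝ) * (w : ℝ) ^ τ < (Fintype.card V : ℝ) ^ τ :=
  tauCritical_anticomplete_cograph_general G τ hτ0 hcrit m w hm C hne hproper hdisj hanti hcard
end
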